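/- There is a surjective homomorphism from the group G(Q) of the once-punctured annulus quiver onto the affine Weyl group of type D̃_4: the assignment t_1 ↦ s_1, t_2 ↦ s_2, t_3 ↦ s_3, t_4 ↦ s_3s_2s_4s_2s_3, t_5 ↦ s_4s_2s_5s_2s_4 respects all defining relations of G(Q). -/

import Mathlib

/-!
In the paper's 1-based indexing, the images `T₁, …, T₅` of the generators are reflections of `W`:
`T₄ = (s₃s₂) s₄ (s₃s₂)⁻¹` and `T₅ = (s₄s₂) s₅ (s₄s₂)⁻¹`. The braid relations
`sᵢ sⱼ sᵢ⁻¹ = sⱼ sᵢ sⱼ⁻¹` allow other conjugators in these formulas, and for each relator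
`(TᵢTⱼ)ᵐ` of `G(Q)` some common conjugator exhibits it as a conjugate of a Coxeter relator
`(sₖsₗ)ᵐ`; the cycle relator collapses to `(s₁s₄)²`. Conversely `s₄` and `s₅` are conjugates of
`T₄` and `T₅` by elements of the image, so the map is onto.
-/

namespace PuncturedAnnulus

/-- Generators of the free group on five letters `t₁, …, t₅` (indexed `0, …, 4`). -/
def x (i : Fin 5) : FreeGroup (Fin 5) := FreeGroup.of i

/-- Defining relators of the group `G(Q)` of the once-punctured annulus quiver:
`tᵢ²`; `(t₁t₂)³, (t₁t₄)³, (t₁t₅)³, (t₂t₃)³, (t₃t₄)³, (t₃t₅)³`;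
`(t₁t₃)², (t₂t₄)², (t₂t₅)², (t₄t₅)²`; and the cycle relation `(t₁t₂t₃t₄t₃t₂)²`. -/
def GQrels : Set (FreeGroup (Fin 5)) :=
  { (x 0) ^ 2, (x 1) ^ 2, (x 2) ^ 2, (x 3) ^ 2, (x 4) ^ 2,
    (x 0 * x 1) ^ 3, (x 0 * x 3) ^ 3, (x 0 * x 4) ^ 3,
    (x 1 * x 2) ^ 3, (x 2 * x 3) ^ 3, (x 2 * x 4) ^ 3,
    (x 0 * x 2) ^ 2, (x 1 * x 3) ^ 2, (x 1 * x 4) ^ 2, (x 3 * x 4) ^ 2,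
    (x 0 * x 1 * x 2 * x 3 * x 2 * x 1) ^ 2 }

/-- Defining relators of the affine Weyl group of type `D̃₄`: generators
`s₁, …, s₅` (indexed `0, …, 4`) with `s₂` (index `1`) the central node. -/
def Wrels : Set (FreeGroup (Fin 5)) :=
  { (x 0) ^ 2, (x 1) ^ 2, (x 2) ^ 2, (x 3) ^ 2, (x 4) ^ 2,
    (x 1 * x 0) ^ 3, (x 1 * x 2) ^ 3, (x 1 * x 3) ^ 3, (x 1 * x 4) ^ 3,
    (x 0 * x 2) ^ 2, (x 0 * x 3) ^ 2, (x 0 * x 4) ^ 2,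
    (x 2 * x 3) ^ 2, (x 2 * x 4) ^ 2, (x 3 * x 4) ^ 2 }

/-- The group `G(Q)` of the once-punctured annulus with one marked point on each
boundary component. -/
def GQ : Type := PresentedGroup GQrels

/-- The affine Weyl group of type `D̃₄`. -/
def W : Type := PresentedGroup Wrels

instance : Group GQ := by unfold GQ; infer_instance
instance : Group W := by unfold W; infer_instance

/-- The generator `tᵢ` of `G(Q)`. -/
def t (i : Fin 5) : GQ := PresentedGroup.of i

/-- The simple reflection `sᵢ` of the affine Weyl group of type `D̃₄`. -/
def s (i : Fin 5) : W := PresentedGroup.of i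

end PuncturedAnnulus

open MulAut

section Group

variable {G : Type*} [Group G] {a b : G}

theorem inv_eq_self_of_sq_eq_one (ha : a ^ 2 = 1) : a⁻¹ = a :=
  inv_eq_of_mul_eq_one_right (by rwa [← sq])

theorem commute_of_mul_sq_eq_one (ha : a ^ 2 = 1) (hb : b ^ 2 = 1) (hab : (a * b) ^ 2 = 1) :
    Commute a b := by
  have h := inv_eq_self_of_sq_eq_one hab
  rw [mul_inv_rev, inv_eq_self_of_sq_eq_one ha, inv_eq_self_of_sq_eq_one hb] at h
  exact h.symm

theorem conj_comm_of_mul_pow_three_eq_one (ha : a ^ 2 = 1) (hb : b ^ 2 = 1)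
    (hab : (a * b) ^ 3 = 1) : conj a b = conj b a := by
  have h : (a * b * a) * (b * a * b) = 1 := by
    rw [← hab]; simp only [pow_succ, pow_zero, one_mul, mul_assoc]
  rw [conj_apply, conj_apply, inv_eq_self_of_sq_eq_one ha, inv_eq_self_of_sq_eq_one hb,
    eq_inv_of_mul_eq_one_left h, mul_inv_rev, mul_inv_rev, inv_eq_self_of_sq_eq_one ha,
    inv_eq_self_of_sq_eq_one hb, mul_assoc]

theorem pow_eq_one_of_eq_conj {x y g : G} {n : ℕ} (h : x = conj g y) (hy : y ^ n = 1) :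
    x ^ n = 1 := by
  rw [h, ← map_pow, hy, map_one]

theorem Subgroup.conj_mem {H : Subgroup G} {g x : G} (hg : g ∈ H) (hx : x ∈ H) :
    conj g x ∈ H :=
  H.mul_mem (H.mul_mem hg hx) (H.inv_mem hg)

end Group

namespace PuncturedAnnulus

theorem s_sq (i : Fin 5) : s i ^ 2 = 1 := by
  have h : x i ^ 2 ∈ Wrels := by fin_cases i <;> simp [Wrels]
  exact (map_pow _ _ _).symm.trans (PresentedGroup.one_of_mem h)

theorem s_one_mul_s_pow_three {i : Fin 5} (hi : i ≠ 1) : (s 1 * s i) ^ 3 = 1 := by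
  have h : (x 1 * x i) ^ 3 ∈ Wrels := by fin_cases i <;> simp_all [Wrels]
  have h' := PresentedGroup.one_of_mem h
  rwa [map_pow, map_mul] at h'

theorem commute_s {i j : Fin 5} (hi : i ≠ 1) (hj : j ≠ 1) : Commute (s i) (s j) := by
  wlog hij : i < j generalizing i j
  · rcases (not_lt.1 hij).lt_or_eq with h | rfl
    · exact (this hj hi h).symm
    · exact Commute.refl _
  have h : (x i * x j) ^ 2 ∈ Wrels := by
    fin_cases i <;> fin_cases j <;> simp_all [Wrels]
  have h' := PresentedGroup.one_of_mem h
  rw [map_pow, map_mul] at h'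
  exact commute_of_mul_sq_eq_one (s_sq i) (s_sq j) h'

theorem s_inv (i : Fin 5) : (s i)⁻¹ = s i :=
  inv_eq_self_of_sq_eq_one (s_sq i)

theorem s_mul_self (i : Fin 5) : s i * s i = 1 := by
  rw [← sq, s_sq]

theorem s_mul_s_mul (i : Fin 5) (g : W) : s i * (s i * g) = g := by
  rw [← mul_assoc, s_mul_self, one_mul]

theorem conj_s_conj_s (i : Fin 5) (g : W) : conj (s i) (conj (s i) g) = g := by
  rw [← mul_apply, ← map_mul, ← sq, s_sq, map_one, one_apply]

theorem conj_s_one_s (i : Fin 5) : conj (s 1) (s i) = conj (s i) (s 1) := by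
  rcases eq_or_ne i 1 with rfl | hi
  · rfl
  · exact conj_comm_of_mul_pow_three_eq_one (s_sq 1) (s_sq i) (s_one_mul_s_pow_three hi)

theorem conj_s_s {i j : Fin 5} (hi : i ≠ 1) (hj : j ≠ 1) : conj (s i) (s j) = s j :=
  (commute_s hi hj).mul_inv_cancel

theorem s_mul_s_one_pow_three {i : Fin 5} (hi : i ≠ 1) : (s i * s 1) ^ 3 = 1 :=
  pow_eq_one_of_eq_conj (g := s i) (by rw [conj_apply, ← mul_assoc, mul_inv_cancel_right])
    (s_one_mul_s_pow_three hi)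

theorem s_mul_s_sq {i j : Fin 5} (hi : i ≠ 1) (hj : j ≠ 1) : (s i * s j) ^ 2 = 1 := by
  rw [(commute_s hi hj).mul_pow, s_sq, s_sq, one_mul]

def tImage : Fin 5 → W
  | 0 => s 0
  | 1 => s 1
  | 2 => s 2
  | 3 => conj (s 2 * s 1) (s 3)
  | 4 => conj (s 3 * s 1) (s 4)

theorem tImage_three : tImage 3 = s 2 * s 1 * s 3 * s 1 * s 2 := by
  simp only [tImage, conj_apply, mul_inv_rev, s_inv, mul_assoc]

theorem tImage_four : tImage 4 = s 3 * s 1 * s 4 * s 1 * s 3 := by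
  simp only [tImage, conj_apply, mul_inv_rev, s_inv, mul_assoc]

theorem tImage_three_eq_conj_s_one : tImage 3 = conj (s 2 * s 3) (s 1) := by
  rw [tImage, map_mul, map_mul, mul_apply, mul_apply, conj_s_one_s]

theorem tImage_four_eq_conj_s_one : tImage 4 = conj (s 3 * s 4) (s 1) := by
  rw [tImage, map_mul, map_mul, mul_apply, mul_apply, conj_s_one_s]

theorem tImage_three_eq_conj_s_two : tImage 3 = conj (s 3 * s 1) (s 2) := by
  rw [map_mul, mul_apply, conj_s_one_s, ← mul_apply, ← map_mul,
    (commute_s (by decide) (by decide)).eq, tImage_three_eq_conj_s_one]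

theorem tImage_sq (i : Fin 5) : tImage i ^ 2 = 1 := by
  fin_cases i
  exacts [s_sq 0, s_sq 1, s_sq 2, pow_eq_one_of_eq_conj rfl (s_sq 3),
    pow_eq_one_of_eq_conj rfl (s_sq 4)]

theorem conj_s_mul_s_s {i j k : Fin 5} (hi : i ≠ 1) (hj : j ≠ 1) (hk : k ≠ 1) :
    conj (s i * s j) (s k) = s k := by
  rw [map_mul, mul_apply, conj_s_s hj hk, conj_s_s hi hk]

theorem conj_s_mul_s_one_s (i : Fin 5) : conj (s i * s 1) (s i) = s 1 := by
  rw [map_mul, mul_apply, conj_s_one_s, conj_s_conj_s]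

theorem tImage_rels : ∀ r ∈ GQrels, FreeGroup.lift tImage r = 1 := by
  simp only [GQrels, Set.mem_insert_iff, Set.mem_singleton_iff, forall_eq_or_imp, forall_eq,
    x, map_pow, map_mul, FreeGroup.lift_apply_of]
  have h0 : (0 : Fin 5) ≠ 1 := by decide
  have h2 : (2 : Fin 5) ≠ 1 := by decide
  have h3 : (3 : Fin 5) ≠ 1 := by decide
  have h4 : (4 : Fin 5) ≠ 1 := by decide
  refine ⟨tImage_sq 0, tImage_sq 1, tImage_sq 2, tImage_sq 3, tImage_sq 4,
    s_mul_s_one_pow_three h0, ?_, ?_, s_one_mul_s_pow_three h2, ?_, ?_, s_mul_s_sq h0 h2, ?_, ?_,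
    ?_, ?_⟩
  · refine pow_eq_one_of_eq_conj (g := s 2 * s 3) ?_ (s_mul_s_one_pow_three h0)
    rw [tImage_three_eq_conj_s_one, map_mul (conj _) (s 0), conj_s_mul_s_s h2 h3 h0]; rfl
  · refine pow_eq_one_of_eq_conj (g := s 3 * s 4) ?_ (s_mul_s_one_pow_three h0)
    rw [tImage_four_eq_conj_s_one, map_mul (conj _) (s 0), conj_s_mul_s_s h3 h4 h0]; rfl
  · refine pow_eq_one_of_eq_conj (g := s 2 * s 3) ?_ (s_mul_s_one_pow_three h2)
    rw [tImage_three_eq_conj_s_one, map_mul (conj _) (s 2), conj_s_mul_s_s h2 h3 h2]; rfl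
  · refine pow_eq_one_of_eq_conj (g := s 3 * s 4) ?_ (s_mul_s_one_pow_three h2)
    rw [tImage_four_eq_conj_s_one, map_mul (conj _) (s 2), conj_s_mul_s_s h3 h4 h2]; rfl
  · refine pow_eq_one_of_eq_conj (g := s 2 * s 1) ?_ (s_mul_s_sq h2 h3)
    rw [map_mul, conj_s_mul_s_one_s]; rfl
  · refine pow_eq_one_of_eq_conj (g := s 3 * s 1) ?_ (s_mul_s_sq h3 h4)
    rw [map_mul, conj_s_mul_s_one_s]; rfl
  · refine pow_eq_one_of_eq_conj (g := s 3 * s 1) ?_ (s_mul_s_sq h2 h4)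
    rw [map_mul, ← tImage_three_eq_conj_s_two]; rfl
  · have h : tImage 0 * tImage 1 * tImage 2 * tImage 3 * tImage 2 * tImage 1 = s 0 * s 3 := by
      simp only [tImage, conj_apply, mul_inv_rev, s_inv, mul_assoc, s_mul_s_mul, s_mul_self,
        mul_one]
    rw [h, s_mul_s_sq h0 h3]

theorem closure_range_tImage : Subgroup.closure (Set.range tImage) = ⊤ := by
  set H := Subgroup.closure (Set.range tImage)
  have hT (j : Fin 5) : tImage j ∈ H := Subgroup.subset_closure ⟨j, rfl⟩
  have hconj (i j : Fin 5) (g : W) : conj (s i * s j) (conj (s j * s i) g) = g := by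
    rw [← mul_apply, ← map_mul, mul_assoc, s_mul_s_mul, s_mul_self, map_one, one_apply]
  have h3 : s 3 ∈ H := hconj 1 2 (s 3) ▸ Subgroup.conj_mem (H.mul_mem (hT 1) (hT 2)) (hT 3)
  have h4 : s 4 ∈ H := hconj 1 3 (s 4) ▸ Subgroup.conj_mem (H.mul_mem (hT 1) h3) (hT 4)
  refine eq_top_iff.2 ((PresentedGroup.closure_range_of Wrels).symm.le.trans ?_)
  refine (Subgroup.closure_le (G := W) H).2 ?_
  rintro _ ⟨i, rfl⟩
  fin_cases i
  exacts [hT 0, hT 1, hT 2, h3, h4]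

theorem exists_surjective_hom_onto_affine_D4 :
    ∃ φ : GQ →* W, Function.Surjective φ ∧
      φ (t 0) = s 0 ∧ φ (t 1) = s 1 ∧ φ (t 2) = s 2 ∧
      φ (t 3) = s 2 * s 1 * s 3 * s 1 * s 2 ∧
      φ (t 4) = s 3 * s 1 * s 4 * s 1 * s 3 := by
  let φ : GQ →* W := PresentedGroup.toGroup tImage_rels
  have hφ (i : Fin 5) : φ (t i) = tImage i := PresentedGroup.toGroup.of tImage_rels
  have hsurj : Function.Surjective φ := by
    rw [← MonoidHom.range_eq_top, eq_top_iff, ← closure_range_tImage, Subgroup.closure_le]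
    rintro _ ⟨i, rfl⟩
    exact ⟨t i, hφ i⟩
  exact ⟨φ, hsurj, hφ 0, hφ 1, hφ 2, (hφ 3).trans tImage_three, (hφ 4).trans tImage_four⟩

end PuncturedAnnulus
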